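/- Let G = (V,E) be a finite simple graph. There is a bijection between the regions of the graphical arrangement of G (connected components of ℝ^V minus the hyperplanes z_u = z_w over edges {u,w}) and the acyclic orientations of G, sending a region containing a point x to the orientation directing each edge {u,w} as u → w when x_u > x_w. -/
import Mathlib


open SimpleGraph Polynomial

/-- `r` is an orientation of the simple graph `G`: every directed edge lies over an
edge of `G`, and every edge of `G` gets exactly one of its two directions. -/
def IsOrientation {V : Type*} (G : SimpleGraph V) (r : V → V → Prop) : Prop :=
  (∀ u v, r u v → G.Adj u v) ∧ (∀ u v, G.Adj u v → (r u v ↔ ¬ r v u))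

/-- A directed relation is acyclic if it has no directed cycles. -/
def IsAcyclicRel {V : Type*} (r : V → V → Prop) : Prop :=
  ∀ v, ¬ Relation.TransGen r v v

/-- The number of acyclic orientations of `G`. -/
noncomputable def acyclicOrientationCount {V : Type*} (G : SimpleGraph V) : ℕ :=
  Nat.card {r : V → V → Prop // IsOrientation G r ∧ IsAcyclicRel r}

/-- The complement in `ℝ^V` of the graphical arrangement of `G` (hyperplanes
`z_u = z_w` over edges `{u,w}`). -/
def graphicalComplement {V : Type*} (G : SimpleGraph V) : Set (V → ℝ) :=
  {z | ∀ u w, G.Adj u w → z u ≠ z w}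

/-- The regions of the graphical arrangement of `G`. -/
def GraphicalRegions {V : Type*} (G : SimpleGraph V) :=
  {C : Set (V → ℝ) //
    ∃ x ∈ graphicalComplement G, C = connectedComponentIn (graphicalComplement G) x}

/-- The acyclic orientations of `G`. -/
def AcyclicOrientations {V : Type*} (G : SimpleGraph V) :=
  {r : V → V → Prop // IsOrientation G r ∧ IsAcyclicRel r}

section GZ
variable {V : Type*} (G : SimpleGraph V)

/-- The orientation determined by a point. -/
def orientOf (x : V → ℝ) : V → V → Prop := fun u w => G.Adj u w ∧ x w < x u

lemma orientOf_isOrientation {x : V → ℝ} (hx : x ∈ graphicalComplement G) :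
    IsOrientation G (orientOf G x) := by
  refine ⟨fun u v h => h.1, fun u v h => ?_⟩
  have hne := hx u v h
  constructor
  · rintro ⟨_, hlt⟩ ⟨_, hlt'⟩; exact absurd (hlt.trans hlt') (lt_irrefl _)
  · intro hn
    refine ⟨h, ?_⟩
    rcases lt_or_gt_of_ne hne with h1 | h1
    · exact absurd ⟨h.symm, h1⟩ hn
    · exact h1

lemma orientOf_lt {x : V → ℝ} {a b : V} (h : Relation.TransGen (orientOf G x) a b) :
    x b < x a := by
  induction h with
  | single h => exact h.2
  | tail _ h ih => exact h.2.trans ih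

lemma orientOf_acyclic (x : V → ℝ) : IsAcyclicRel (orientOf G x) :=
  fun v hv => lt_irrefl _ (orientOf_lt G hv)

/-- Sign constancy on connected components. -/
lemma sign_const {x y : V → ℝ} (hx : x ∈ graphicalComplement G)
    (hy : y ∈ connectedComponentIn (graphicalComplement G) x)
    {u w : V} (h : G.Adj u w) (hlt : x w < x u) : y w < y u := by
  set s := connectedComponentIn (graphicalComplement G) x with hs
  have hsub : s ⊆ graphicalComplement G := connectedComponentIn_subset _ _
  have hxs : x ∈ s := mem_connectedComponentIn hx
  have hconn : IsPreconnected s := isPreconnected_connectedComponentIn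
  by_contra hcon
  have hyg : y ∈ graphicalComplement G := hsub hy
  have hy' : y u < y w := lt_of_le_of_ne (not_lt.mp hcon) (hyg u w h)
  have hf : ContinuousOn (fun z : V → ℝ => z u - z w) s :=
    ((continuous_apply u).sub (continuous_apply w)).continuousOn
  have := hconn.intermediate_value hy hxs hf
  have h0 : (0 : ℝ) ∈ Set.Icc (y u - y w) (x u - x w) :=
    ⟨by linarith, by linarith⟩
  obtain ⟨z, hz, hz0⟩ := this h0
  exact hsub hz u w h (by linarith [sub_eq_zero.mp hz0])

lemma orientOf_eq_of_mem {x y : V → ℝ} (hx : x ∈ graphicalComplement G)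
    (hy : y ∈ connectedComponentIn (graphicalComplement G) x) :
    orientOf G y = orientOf G x := by
  have hyg : y ∈ graphicalComplement G := connectedComponentIn_subset _ _ hy
  have hxy : x ∈ connectedComponentIn (graphicalComplement G) y := by
    rw [← connectedComponentIn_eq hy]
    exact mem_connectedComponentIn hx
  funext u w
  apply propext
  constructor
  · rintro ⟨h, hlt⟩; exact ⟨h, sign_const G hyg hxy h hlt⟩
  · rintro ⟨h, hlt⟩; exact ⟨h, sign_const G hx hy h hlt⟩

/-- Segment argument: equal orientations imply same component. -/
lemma mem_component_of_orientOf_eq {x y : V → ℝ} (hx : x ∈ graphicalComplement G)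
    (hy : y ∈ graphicalComplement G) (h : orientOf G x = orientOf G y) :
    y ∈ connectedComponentIn (graphicalComplement G) x := by
  have key : ∀ u w : V, G.Adj u w → ∀ z ∈ segment ℝ x y, x w < x u → z w < z u := by
    intro u w huw z hz hlt
    obtain ⟨a, b, ha, hb, hab, hz⟩ := hz
    have hy' : y w < y u := by
      have := congrFun (congrFun h u) w
      exact ((this ▸ (⟨huw, hlt⟩ : orientOf G x u w)) : orientOf G y u w).2
    have hzu : z u = a * x u + b * y u := by rw [← hz]; simp
    have hzw : z w = a * x w + b * y w := by rw [← hz]; simp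
    rcases ha.lt_or_eq with ha' | ha'
    · nlinarith [mul_nonneg hb (sub_nonneg.mpr hy'.le), mul_pos ha' (sub_pos.mpr hlt)]
    · have hb1 : b = 1 := by linarith
      rw [hzu, hzw, ← ha', hb1]; simpa using hy'
  have hseg : segment ℝ x y ⊆ graphicalComplement G := by
    intro z hz u w huw
    rcases lt_or_gt_of_ne (hx u w huw) with h1 | h1
    · exact (key w u huw.symm z hz h1).ne
    · exact (key u w huw z hz h1).ne'
  have hconn : IsPreconnected (segment ℝ x y) := (convex_segment x y).isPreconnected
  exact hconn.subset_connectedComponentIn (left_mem_segment ℝ x y) hseg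
    (right_mem_segment ℝ x y)

variable [Fintype V]

/-- A point realizing a given acyclic orientation (topological-sort heights). -/
noncomputable def pointOf (r : V → V → Prop) : V → ℝ :=
  fun v => ((Set.ncard {z | Relation.TransGen r v z} : ℕ) : ℝ)

lemma pointOf_lt {r : V → V → Prop} (hr : IsAcyclicRel r) {u w : V} (h : r u w) :
    pointOf r w < pointOf r u := by
  have hss : {z | Relation.TransGen r w z} ⊂ {z | Relation.TransGen r u z} := by
    constructor
    · intro z hz; exact Relation.TransGen.head h hz
    · intro hsub
      exact hr w (hsub (Relation.TransGen.single h))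
  have := Set.ncard_lt_ncard hss (Set.toFinite _)
  simp only [pointOf]
  exact_mod_cast this

lemma orientOf_pointOf {r : V → V → Prop} (hr : IsOrientation G r) (ha : IsAcyclicRel r) :
    orientOf G (pointOf r) = r := by
  funext u w
  apply propext
  constructor
  · rintro ⟨h, hlt⟩
    by_contra hn
    have hwu : r w u := (hr.2 w u h.symm).mpr hn
    exact absurd (pointOf_lt ha hwu) (not_lt.mpr hlt.le)
  · intro hruw
    refine ⟨hr.1 u w hruw, pointOf_lt ha hruw⟩

lemma pointOf_mem {r : V → V → Prop} (hr : IsOrientation G r) (ha : IsAcyclicRel r) :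
    pointOf r ∈ graphicalComplement G := by
  intro u w h
  rcases (hr.2 u w h).symm with _
  by_cases hc : r u w
  · exact (pointOf_lt ha hc).ne'
  · have : r w u := by
      by_contra hc2
      exact hc ((hr.2 u w h).mpr hc2)
    exact (pointOf_lt ha this).ne

end GZ

lemma choose_orient {V : Type*} (G : SimpleGraph V) (C : GraphicalRegions G)
    {x : V → ℝ} (hx : x ∈ C.1) :
    orientOf G C.2.choose = orientOf G x := by
  obtain ⟨hx0, hCeq⟩ := C.2.choose_spec
  have hm : x ∈ connectedComponentIn (graphicalComplement G) C.2.choose := by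
    rw [← hCeq]; exact hx
  exact (orientOf_eq_of_mem G hx0 hm).symm

/-- Greene–Zaslavsky: regions of the graphical arrangement biject with acyclic
orientations, a region containing `x` going to the orientation `u → w` iff `x_u > x_w`. -/
theorem regions_biject_acyclic_orientations {V : Type*} [Fintype V] (G : SimpleGraph V) :
    ∃ e : GraphicalRegions G ≃ AcyclicOrientations G,
      ∀ (C : GraphicalRegions G) (x : V → ℝ), x ∈ C.1 →
        (e C).1 = fun u w => G.Adj u w ∧ x w < x u := by
  classical
  refine ⟨{
    toFun := fun C => ⟨orientOf G C.2.choose,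
      orientOf_isOrientation G C.2.choose_spec.1, orientOf_acyclic G _⟩
    invFun := fun r => ⟨connectedComponentIn (graphicalComplement G) (pointOf r.1),
      pointOf r.1, pointOf_mem G r.2.1 r.2.2, rfl⟩
    left_inv := ?_
    right_inv := ?_ }, ?_⟩
  · rintro ⟨C, hC⟩
    obtain ⟨hx0, hCeq⟩ := hC.choose_spec
    set x0 := hC.choose
    apply Subtype.ext
    show connectedComponentIn (graphicalComplement G) (pointOf (orientOf G x0)) = C
    have hpt : orientOf G (pointOf (orientOf G x0)) = orientOf G x0 :=
      orientOf_pointOf G (orientOf_isOrientation G hx0) (orientOf_acyclic G x0)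
    have hmem : pointOf (orientOf G x0) ∈
        connectedComponentIn (graphicalComplement G) x0 :=
      mem_component_of_orientOf_eq G hx0
        (pointOf_mem G (orientOf_isOrientation G hx0) (orientOf_acyclic G x0)) hpt.symm
    rw [hCeq, (connectedComponentIn_eq hmem)]
  · rintro ⟨r, hr⟩
    apply Subtype.ext
    have hpm : pointOf r ∈ graphicalComplement G := pointOf_mem G hr.1 hr.2
    have h1 := choose_orient G
      ⟨connectedComponentIn (graphicalComplement G) (pointOf r),
        pointOf r, hpm, rfl⟩ (mem_connectedComponentIn hpm)
    exact h1.trans (orientOf_pointOf G hr.1 hr.2)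
  · rintro ⟨C, hC⟩ x hx
    obtain ⟨hx0, hCeq⟩ := hC.choose_spec
    show orientOf G hC.choose = fun u w => G.Adj u w ∧ x w < x u
    have hxmem : x ∈ connectedComponentIn (graphicalComplement G) hC.choose := by
      rw [← hCeq]; exact hx
    exact (orientOf_eq_of_mem G hx0 hxmem).symm
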